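/- Let B ∈ ℝ^{m×n} be an arbitrary matrix and Ω ∈ ℝ^{n×ℓ} a matrix. Let Q be a matrix whose columns form an orthonormal basis for range(BΩ), so that QQᵀ is the orthogonal projection onto range(BΩ). Set A = BᵀB and let Â = AΩ(ΩᵀAΩ)†ΩᵀA be the corresponding Nyström approximation of A. Then for every s ≥ 1, ‖B − QQᵀB‖_(2s)² = ‖A − Â‖_(s). -/

import Mathlib

open MeasureTheory ProbabilityTheory Matrix Filter Finset

noncomputable section

/-- The singular values of a real rectangular matrix (with multiplicity, padded with zeros),
defined as the square roots of the eigenvalues of `Aᴴ * A`. -/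
def singVals {m n : ℕ} (A : Matrix (Fin m) (Fin n) ℝ) (i : Fin n) : ℝ :=
  Real.sqrt (((show (Aᵀ * A).IsHermitian by
    simpa [Matrix.conjTranspose_eq_transpose_of_trivial] using
      Matrix.isHermitian_conjTranspose_mul_self A).eigenvalues i))

/-- Spectral norm (largest singular value). -/
def specNorm {m n : ℕ} (A : Matrix (Fin m) (Fin n) ℝ) : ℝ := ⨆ i, singVals A i

/-- Frobenius norm. -/
def frobNorm {m n : ℕ} (A : Matrix (Fin m) (Fin n) ℝ) : ℝ :=
  Real.sqrt (∑ i, ∑ j, (A i j) ^ 2)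

/-- Nuclear (trace) norm. -/
def nuclearNorm {m n : ℕ} (A : Matrix (Fin m) (Fin n) ℝ) : ℝ := ∑ i, singVals A i

/-- Schatten `s`-norm. -/
def schattenNorm {m n : ℕ} (s : ℝ) (A : Matrix (Fin m) (Fin n) ℝ) : ℝ :=
  (∑ i, singVals A i ^ s) ^ s⁻¹

/-- Moore–Penrose pseudoinverse, via the limit formula `A† = lim_{ε→0⁺} (AᵀA + εI)⁻¹Aᵀ`. -/
def pinv {m n : ℕ} (A : Matrix (Fin m) (Fin n) ℝ) : Matrix (Fin n) (Fin m) ℝ :=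
  limUnder (nhdsWithin (0 : ℝ) (Set.Ioi 0))
    (fun ε : ℝ => (Aᵀ * A + ε • (1 : Matrix (Fin n) (Fin n) ℝ))⁻¹ * Aᵀ)

/-- The centered multivariate Gaussian measure `N(0, K)` on `Fin n → ℝ`, obtained by pushing
forward a standard Gaussian vector under multiplication with `K^{1/2}`. -/
def mvGaussian {n : ℕ} (K : Matrix (Fin n) (Fin n) ℝ) (hK : K.PosSemidef) :
    Measure (Fin n → ℝ) :=
  (Measure.pi fun _ : Fin n => gaussianReal 0 1).map fun x =>
    (hK.1.eigenvectorUnitary.1 * Matrix.diagonal (Real.sqrt ∘ hK.1.eigenvalues) *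
      (star hK.1.eigenvectorUnitary : Matrix (Fin n) (Fin n) ℝ)).mulVec x

/-- The Nyström approximation `A Ω (Ωᵀ A Ω)† Ωᵀ A`. -/
def nystromApprox {n l : ℕ} (A : Matrix (Fin n) (Fin n) ℝ) (W : Matrix (Fin n) (Fin l) ℝ) :
    Matrix (Fin n) (Fin n) ℝ :=
  A * W * pinv (Wᵀ * A * W) * Wᵀ * A

section Setup

variable {k m : ℕ}

/-- First `k` columns of `U`. -/
def Umat1 (U : Matrix (Fin (k + m)) (Fin (k + m)) ℝ) : Matrix (Fin (k + m)) (Fin k) ℝ :=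
  U.submatrix id (Fin.castAdd m)

/-- Last `m` columns of `U`. -/
def Umat2 (U : Matrix (Fin (k + m)) (Fin (k + m)) ℝ) : Matrix (Fin (k + m)) (Fin m) ℝ :=
  U.submatrix id (Fin.natAdd k)

/-- `Σ₂ = diag(σ_{k+1}, …, σ_n)`. -/
def Sig2 (σ : Fin (k + m) → ℝ) : Matrix (Fin m) (Fin m) ℝ :=
  Matrix.diagonal fun i => σ (Fin.natAdd k i)

/-- `Σ₂^{1/2}`. -/
def Sig2half (σ : Fin (k + m) → ℝ) : Matrix (Fin m) (Fin m) ℝ :=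
  Matrix.diagonal fun i => Real.sqrt (σ (Fin.natAdd k i))

/-- `K̃₁₁ = U₁ᵀ K U₁`. -/
def Kt11 (U K : Matrix (Fin (k + m)) (Fin (k + m)) ℝ) : Matrix (Fin k) (Fin k) ℝ :=
  (Umat1 U)ᵀ * K * Umat1 U

/-- `K̃₂₁ = U₂ᵀ K U₁`. -/
def Kt21 (U K : Matrix (Fin (k + m)) (Fin (k + m)) ℝ) : Matrix (Fin m) (Fin k) ℝ :=
  (Umat2 U)ᵀ * K * Umat1 U

/-- `K̃₂₂ = U₂ᵀ K U₂`. -/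
def Kt22 (U K : Matrix (Fin (k + m)) (Fin (k + m)) ℝ) : Matrix (Fin m) (Fin m) ℝ :=
  (Umat2 U)ᵀ * K * Umat2 U

/-- Schur complement `K̃₂₂.₁ = K̃₂₂ − K̃₂₁ K̃₁₁⁻¹ K̃₂₁ᵀ`. -/
def Kt221 (U K : Matrix (Fin (k + m)) (Fin (k + m)) ℝ) : Matrix (Fin m) (Fin m) ℝ :=
  Kt22 U K - Kt21 U K * (Kt11 U K)⁻¹ * (Kt21 U K)ᵀ

/-- `β_k^{(ξ)} = ‖Σ₂^{1/2} K̃₂₂.₁ Σ₂^{1/2}‖_ξ ‖K̃₁₁⁻¹‖₂ / ‖Σ₂‖_ξ`. -/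
def betaNorm (σ : Fin (k + m) → ℝ) (U K : Matrix (Fin (k + m)) (Fin (k + m)) ℝ)
    (ξ : Matrix (Fin m) (Fin m) ℝ → ℝ) : ℝ :=
  ξ (Sig2half σ * Kt221 U K * Sig2half σ) * specNorm (Kt11 U K)⁻¹ / ξ (Sig2 σ)

/-- `δ_k^{(ξ)} = ‖Σ₂^{1/2} K̃₂₁ K̃₁₁⁻² K̃₂₁ᵀ Σ₂^{1/2}‖_ξ / ‖Σ₂‖_ξ`. -/
def deltaNorm (σ : Fin (k + m) → ℝ) (U K : Matrix (Fin (k + m)) (Fin (k + m)) ℝ)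
    (ξ : Matrix (Fin m) (Fin m) ℝ → ℝ) : ℝ :=
  ξ (Sig2half σ * (Kt21 U K * ((Kt11 U K)⁻¹ * (Kt11 U K)⁻¹) * (Kt21 U K)ᵀ) * Sig2half σ)
    / ξ (Sig2 σ)

end Setup

/-!
Write `BΩ = QX`. Because `range Q = range (BΩ)` and `QᵀQ = 1`, the factor `X` has a right
inverse, so `XXᵀ` is invertible and the full-rank factorization formula for the pseudoinverse
gives `(ΩᵀAΩ)† = (XᵀX)† = Xᵀ (XXᵀ)⁻² X`; hence `Â = Bᵀ QQᵀ B`. The residual `E = B - QQᵀB` then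
satisfies `EᵀE = A - Â`, and `‖E‖_(2s)² = ‖EᵀE‖_(s)` because the singular values of the positive
semidefinite matrix `EᵀE` are its eigenvalues, the squared singular values of `E`.
-/

open Topology

theorem Matrix.exists_mul_eq_of_range_mulVecLin_le {R m n k : Type*} [CommSemiring R]
    [Fintype n] [DecidableEq n] [Fintype k] {N : Matrix m k R} {M : Matrix m n R}
    (h : LinearMap.range M.mulVecLin ≤ LinearMap.range N.mulVecLin) :
    ∃ X : Matrix k n R, N * X = M := by
  choose X hX using fun j => h ⟨Pi.single j 1, rfl⟩
  refine ⟨(Matrix.of X)ᵀ, ext fun i j => ?_⟩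
  have hcol := congrFun (hX j) i
  simp only [mulVecLin_apply, mulVec_single_one] at hcol
  simpa [mul_apply, mulVec, dotProduct] using hcol

theorem Matrix.isUnit_mul_transpose_of_mul_eq_one {m n : Type*} [Fintype m] [DecidableEq m]
    [Fintype n] {X : Matrix m n ℝ} {Y : Matrix n m ℝ} (hXY : X * Y = 1) :
    IsUnit (X * Xᵀ) := by
  refine (PosDef.mul_conjTranspose_self X fun u v huv => ?_).isUnit
  simpa [vecMul_vecMul, hXY] using congrArg (· ᵥ* Y) huv

theorem Matrix.transpose_mul_self_sub_mul {m n R : Type*} [Fintype m] [Fintype n]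
    [CommRing R] (B : Matrix m n R) {P : Matrix m m R} (hPt : Pᵀ = P) (hPP : P * P = P) :
    (B - P * B)ᵀ * (B - P * B) = Bᵀ * B - Bᵀ * P * B := by
  simp only [transpose_sub, transpose_mul, hPt, Matrix.sub_mul, Matrix.mul_sub, Matrix.mul_assoc]
  rw [← Matrix.mul_assoc P P B, hPP]
  abel

theorem Matrix.inv_mul_eq_mul_inv_of_mul_eq {m n R : Type*} [Fintype m] [DecidableEq m]
    [Fintype n] [DecidableEq n] [CommRing R] {P : Matrix m m R}
    {S : Matrix n n R} {T : Matrix m n R} (hP : IsUnit P.det) (hS : IsUnit S.det)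
    (h : P * T = T * S) : P⁻¹ * T = T * S⁻¹ :=
  calc P⁻¹ * T = P⁻¹ * (T * S * S⁻¹) := by rw [mul_nonsing_inv_cancel_right _ _ hS]
    _ = P⁻¹ * (P * T) * S⁻¹ := by rw [← h]; simp only [Matrix.mul_assoc]
    _ = T * S⁻¹ := by rw [nonsing_inv_mul_cancel_left _ _ hP]

theorem pinv_mul_of_isUnit {m k n : ℕ} (X : Matrix (Fin m) (Fin k) ℝ)
    (Y : Matrix (Fin k) (Fin n) ℝ) (hX : IsUnit (Xᵀ * X)) (hY : IsUnit (Y * Yᵀ)) :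
    pinv (X * Y) = Yᵀ * (Y * Yᵀ)⁻¹ * (Xᵀ * X)⁻¹ * Xᵀ := by
  set C := Xᵀ * X * (Y * Yᵀ)
  have hC : IsUnit C.det := by
    rw [det_mul]
    exact ((isUnit_iff_isUnit_det _).1 hX).mul ((isUnit_iff_isUnit_det _).1 hY)
  have hCε : Tendsto (fun ε : ℝ => C + ε • (1 : Matrix (Fin k) (Fin k) ℝ)) (𝓝[>] 0) (𝓝 C) := by
    simpa using tendsto_const_nhds (x := C) |>.add (tendsto_id (x := 𝓝[>] (0 : ℝ)) |>.mono_right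
      nhdsWithin_le_nhds |>.smul_const (1 : Matrix (Fin k) (Fin k) ℝ))
  -- `Yᵀ` intertwines `(XY)ᵀ(XY) + ε` with `C + ε`, and the latter stays invertible near `ε = 0`.
  have hpush : ∀ᶠ ε in 𝓝[>] (0 : ℝ), Yᵀ * (C + ε • 1)⁻¹ * Xᵀ
      = ((X * Y)ᵀ * (X * Y) + ε • 1)⁻¹ * (X * Y)ᵀ := by
    have hdet : ∀ᶠ ε in 𝓝[>] (0 : ℝ), (C + ε • 1).det ≠ 0 :=
      (continuous_id.matrix_det.tendsto C).comp hCε |>.eventually_ne hC.ne_zero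
    filter_upwards [hdet, self_mem_nhdsWithin] with ε hε hpos
    have hP : ((X * Y)ᵀ * (X * Y) + ε • 1).PosDef :=
      PosDef.posSemidef_add (posSemidef_conjTranspose_mul_self (X * Y)) (PosDef.one.smul hpos)
    have hcomm : ((X * Y)ᵀ * (X * Y) + ε • 1) * Yᵀ = Yᵀ * (C + ε • 1) := by
      simp only [transpose_mul, Matrix.add_mul, Matrix.mul_add, Matrix.mul_assoc, smul_mul,
        Matrix.mul_smul, Matrix.one_mul, Matrix.mul_one, C]
    rw [← inv_mul_eq_mul_inv_of_mul_eq ((isUnit_iff_isUnit_det _).1 hP.isUnit) (Ne.isUnit hε)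
      hcomm, Matrix.mul_assoc, ← transpose_mul]
  have hinv : Tendsto (fun ε : ℝ => (C + ε • 1)⁻¹) (𝓝[>] 0) (𝓝 C⁻¹) :=
    (continuousAt_matrix_inv C (NormedRing.inverse_continuousAt hC.unit)).tendsto.comp hCε
  have hsandwich : Continuous fun M : Matrix (Fin k) (Fin k) ℝ => Yᵀ * M * Xᵀ :=
    (continuous_const.matrix_mul continuous_id).matrix_mul continuous_const
  rw [pinv, Matrix.mul_assoc _ (Y * Yᵀ)⁻¹, ← Matrix.mul_inv_rev]
  exact ((hsandwich.tendsto _).comp hinv).congr' hpush |>.limUnder_eq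

open Polynomial in
theorem Matrix.IsHermitian.map_eigenvalues_transpose_mul_self {n : Type*} [Fintype n]
    [DecidableEq n] {A : Matrix n n ℝ} (hA : A.IsHermitian) (h : (Aᵀ * A).IsHermitian) :
    univ.val.map h.eigenvalues = univ.val.map fun i => hA.eigenvalues i ^ 2 := by
  have hsq : (Aᵀ * A).charpoly = (cfc (· ^ 2 : ℝ → ℝ) A).charpoly := by
    rw [cfc_pow_id A 2 hA.isSelfAdjoint, sq, ← conjTranspose_eq_transpose_of_trivial, hA.eq]
  have hroots := h.roots_charpoly_eq_eigenvalues
  rw [hsq, hA.charpoly_cfc_eq, roots_prod _ _ (prod_ne_zero_iff.2 fun i _ => X_sub_C_ne_zero _)]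
    at hroots
  simp only [roots_X_sub_C, Multiset.bind_singleton, RCLike.ofReal_real_eq_id,
    Function.id_comp] at hroots
  exact hroots.symm

theorem Matrix.PosSemidef.map_singVals {n : ℕ} {A : Matrix (Fin n) (Fin n) ℝ}
    (hA : A.PosSemidef) : univ.val.map (singVals A) = univ.val.map hA.1.eigenvalues := by
  have hsq := hA.1.map_eigenvalues_transpose_mul_self <| by
    simpa [conjTranspose_eq_transpose_of_trivial] using isHermitian_conjTranspose_mul_self A
  have hsqrt := congrArg (Multiset.map Real.sqrt) hsq
  simp only [Multiset.map_map] at hsqrt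
  refine hsqrt.trans (Multiset.map_congr rfl fun i _ => ?_)
  exact Real.sqrt_sq (hA.eigenvalues_nonneg i)

theorem schattenNorm_two_mul_sq {m n : ℕ} (E : Matrix (Fin m) (Fin n) ℝ) (s : ℝ) :
    schattenNorm (2 * s) E ^ 2 = schattenNorm s (Eᵀ * E) := by
  have hEE : (Eᵀ * E).PosSemidef := by
    simpa [conjTranspose_eq_transpose_of_trivial] using posSemidef_conjTranspose_mul_self E
  have hsum : ∑ i, singVals (Eᵀ * E) i ^ s = ∑ i, hEE.1.eigenvalues i ^ s := by
    simpa only [Finset.sum_eq_multiset_sum, Multiset.map_map, Function.comp_def] using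
      congrArg (fun S => (S.map (· ^ s)).sum) hEE.map_singVals
  have hpow : ∀ i, singVals E i ^ (2 * s) = hEE.1.eigenvalues i ^ s := fun i => by
    rw [singVals, Real.sqrt_eq_rpow, ← Real.rpow_mul (hEE.eigenvalues_nonneg i)]
    ring_nf
  have hnonneg : 0 ≤ ∑ i, hEE.1.eigenvalues i ^ s :=
    sum_nonneg fun i _ => Real.rpow_nonneg (hEE.eigenvalues_nonneg i) s
  rw [schattenNorm, schattenNorm, hsum, sum_congr rfl fun i _ => hpow i,
    ← Real.rpow_mul_natCast hnonneg, mul_inv]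
  ring_nf

theorem nystromApprox_transpose_mul_self {m n l r : ℕ} {B : Matrix (Fin m) (Fin n) ℝ}
    {Om : Matrix (Fin n) (Fin l) ℝ} {Q : Matrix (Fin m) (Fin r) ℝ} {X : Matrix (Fin r) (Fin l) ℝ}
    (hQ : Qᵀ * Q = 1) (hBOm : B * Om = Q * X) (hX : IsUnit (X * Xᵀ)) :
    nystromApprox (Bᵀ * B) Om = Bᵀ * (Q * Qᵀ) * B := by
  have hgram : Omᵀ * (Bᵀ * B) * Om = Xᵀ * X := by
    calc Omᵀ * (Bᵀ * B) * Om = (B * Om)ᵀ * (B * Om) := by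
          simp only [transpose_mul, Matrix.mul_assoc]
      _ = Xᵀ * (Qᵀ * Q) * X := by rw [hBOm, transpose_mul]; simp only [Matrix.mul_assoc]
      _ = Xᵀ * X := by rw [hQ, Matrix.mul_one]
  have hpinv : pinv (Xᵀ * X) = Xᵀ * (X * Xᵀ)⁻¹ * (X * Xᵀ)⁻¹ * X := by
    simpa using pinv_mul_of_isUnit Xᵀ X (by simpa using hX) hX
  have hleft : Bᵀ * B * Om = Bᵀ * Q * X := by rw [Matrix.mul_assoc, hBOm, Matrix.mul_assoc]
  have hright : Omᵀ * (Bᵀ * B) = Xᵀ * Qᵀ * B := by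
    rw [← Matrix.mul_assoc, ← transpose_mul, hBOm, transpose_mul]
  have hG := (isUnit_iff_isUnit_det _).1 hX
  have hmid : X * Xᵀ * (X * Xᵀ)⁻¹ * ((X * Xᵀ)⁻¹ * (X * Xᵀ)) = 1 := by
    rw [mul_nonsing_inv _ hG, nonsing_inv_mul _ hG, Matrix.one_mul]
  calc nystromApprox (Bᵀ * B) Om
      = Bᵀ * Q * (X * Xᵀ * (X * Xᵀ)⁻¹ * ((X * Xᵀ)⁻¹ * (X * Xᵀ))) * Qᵀ * B := by
        rw [nystromApprox, hgram, hpinv, hleft, Matrix.mul_assoc _ Omᵀ, hright]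
        simp only [Matrix.mul_assoc]
    _ = Bᵀ * (Q * Qᵀ) * B := by rw [hmid, Matrix.mul_one, Matrix.mul_assoc Bᵀ Q]

theorem rsvd_eq_nystrom_general
    {m n l r : ℕ}
    (B : Matrix (Fin m) (Fin n) ℝ) (Om : Matrix (Fin n) (Fin l) ℝ)
    (Q : Matrix (Fin m) (Fin r) ℝ) (hQ : Qᵀ * Q = 1)
    (hrange : LinearMap.range (Matrix.mulVecLin Q)
      = LinearMap.range (Matrix.mulVecLin (B * Om)))
    (s : ℝ) :
    schattenNorm (2 * s) (B - Q * Qᵀ * B) ^ 2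
      = schattenNorm s (Bᵀ * B - nystromApprox (Bᵀ * B) Om) := by
  obtain ⟨X, hQX⟩ := exists_mul_eq_of_range_mulVecLin_le hrange.ge
  obtain ⟨Y, hY⟩ := exists_mul_eq_of_range_mulVecLin_le hrange.le
  have hXY : X * Y = 1 :=
    calc X * Y = Qᵀ * (Q * X) * Y := by rw [← Matrix.mul_assoc, hQ, Matrix.one_mul]
      _ = 1 := by rw [hQX, Matrix.mul_assoc, hY, hQ]
  have hP : Q * Qᵀ * (Q * Qᵀ) = Q * Qᵀ := by
    rw [Matrix.mul_assoc, ← Matrix.mul_assoc Qᵀ, hQ, Matrix.one_mul]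
  rw [schattenNorm_two_mul_sq, transpose_mul_self_sub_mul B (by simp [transpose_mul]) hP,
    nystromApprox_transpose_mul_self hQ hQX.symm (isUnit_mul_transpose_of_mul_eq_one hXY)]

/-- the randomized SVD error equals the Nyström error of `A = BᵀB`. -/
theorem rsvd_eq_nystrom
    {m n l r : ℕ}
    (B : Matrix (Fin m) (Fin n) ℝ) (Om : Matrix (Fin n) (Fin l) ℝ)
    (Q : Matrix (Fin m) (Fin r) ℝ) (hQ : Qᵀ * Q = 1)
    (hrange : LinearMap.range (Matrix.mulVecLin Q)
      = LinearMap.range (Matrix.mulVecLin (B * Om)))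
    (s : ℝ) (hs : 1 ≤ s) :
    schattenNorm (2 * s) (B - Q * Qᵀ * B) ^ 2
      = schattenNorm s (Bᵀ * B - nystromApprox (Bᵀ * B) Om) :=
  rsvd_eq_nystrom_general B Om Q hQ hrange s
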